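/- Let n ≥ 1, let V : Fin n → Fin n → ℝ be entrywise nonnegative, let σ : Equiv.Perm (Fin n) maximize ∑_j V (π j) j over all permutations π, define V' i j = V (σ i) j and U j k = V' j k − V' k k. Define y : ℕ → Fin n → ℝ by y 0 j = 0 and y (t+1) j = max over k of (y t k + U j k), let ȳ j = y (n−1) j, and set prices p j = V' j j − ȳ j. Then p is an envy-free price vector for the allocation σ: for every j, V' j j − p j ≥ 0, and for every j ≠ k, V' j j − p j ≥ V' j k − p k. -/

import Mathlib

/-!
Optimality of `σ` says that no permutation `ρ` has positive weight `∑ j, U (ρ j) j`: on the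
complete digraph weighted by `U` (with `U j j = 0`) there is no positive cycle. The iteration `y`
is Bellman–Ford for longest walks, `y t j` being the largest weight of a walk of length `t`
ending at `j`. Cutting a simple cycle out of a walk of length `n` gives a walk of length less
than `n`, ending at the same vertex and weighing at least as much, so `y n ≤ y (n - 1)`. Hence
`ȳ` is a fixed point, `ȳ k + U j k ≤ ȳ j`, which is envy-freeness of `p`; and `ȳ ≥ y 0 = 0`
since `y` increases.
-/

open Finset

section Walks

variable {α : Type*} (U : α → α → ℝ)

noncomputable def walkWeight (w : ℕ → α) (t : ℕ) : ℝ :=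
  ∑ i ∈ range t, U (w (i + 1)) (w i)

lemma walkWeight_succ (w : ℕ → α) (t : ℕ) :
    walkWeight U w (t + 1) = walkWeight U w t + U (w (t + 1)) (w t) :=
  sum_range_succ _ _

/-- A closed walk without repeated vertices is the cycle of a permutation; vertices off the
cycle are fixed points and contribute `U j j = 0`. -/
lemma exists_perm_sum_eq_walkWeight [Fintype α] [DecidableEq α] (hdiag : ∀ j, U j j = 0)
    (w : ℕ → α) (m : ℕ) (hclosed : w m = w 0) (hinj : Set.InjOn w (Set.Iio m)) :
    ∃ ρ : Equiv.Perm α, ∑ j, U (ρ j) j = walkWeight U w m := by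
  set l := (List.range m).map w with hl
  have hnodup : l.Nodup :=
    List.nodup_range.map_on fun i hi j hj h =>
      hinj (Set.mem_Iio.2 (List.mem_range.1 hi)) (Set.mem_Iio.2 (List.mem_range.1 hj)) h
  have hlen : l.length = m := by simp [hl]
  have hnext : ∀ i < m, l.formPerm (w i) = w (i + 1) := by
    intro i hi
    have h := List.formPerm_apply_getElem l hnodup i (hlen ▸ hi)
    simp only [hl, List.getElem_map, List.getElem_range] at h
    rw [h, List.length_map, List.length_range]
    rcases (Nat.add_one_le_of_lt hi).lt_or_eq with h' | h'
    · rw [Nat.mod_eq_of_lt h']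
    · rw [h', Nat.mod_self, hclosed]
  refine ⟨l.formPerm, ?_⟩
  calc ∑ j, U (l.formPerm j) j
      = ∑ j ∈ (range m).image w, U (l.formPerm j) j := by
        refine (sum_subset (subset_univ _) fun j _ hj => ?_).symm
        rw [List.formPerm_apply_of_notMem (by simpa [hl] using hj), hdiag]
    _ = ∑ i ∈ range m, U (l.formPerm (w i)) (w i) :=
        sum_image fun i hi j hj h => hinj (by simpa using hi) (by simpa using hj) h
    _ = walkWeight U w m := sum_congr rfl fun i hi => by rw [hnext i (mem_range.1 hi)]

/-- Cutting the closed segment `w a, …, w (a + d) = w a` out of a walk of length `a + d + r`. -/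
lemma walkWeight_eq_add_of_closed (w : ℕ → α) (a d r : ℕ) (hclosed : w (a + d) = w a) :
    walkWeight U w (a + d + r) =
      walkWeight U (fun i => if i < a then w i else w (i + d)) (a + r) +
        walkWeight U (fun i => w (a + i)) d := by
  set w' : ℕ → α := fun i => if i < a then w i else w (i + d)
  have hhead : ∑ i ∈ range a, U (w' (i + 1)) (w' i) = ∑ i ∈ range a, U (w (i + 1)) (w i) := by
    refine sum_congr rfl fun i hi => ?_
    have hi := mem_range.1 hi
    rcases (Nat.add_one_le_of_lt hi).lt_or_eq with h | h
    · simp [w', hi, h]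
    · simp [w', hi, h, hclosed]
  have htail : ∑ i ∈ range r, U (w' (a + i + 1)) (w' (a + i)) =
      ∑ i ∈ range r, U (w (a + d + i + 1)) (w (a + d + i)) :=
    sum_congr rfl fun i _ => by
      simp only [w', if_neg (show ¬a + i + 1 < a by omega), if_neg (show ¬a + i < a by omega)]
      ring_nf
  simp only [walkWeight, sum_range_add, hhead, htail, ← add_assoc]
  abel

lemma exists_injOn_closed_of_card_le [Fintype α] (w : ℕ → α) (t : ℕ)
    (ht : Fintype.card α ≤ t) :
    ∃ a d r, a + d + r = t ∧ 0 < d ∧ w (a + d) = w a ∧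
      Set.InjOn (fun i => w (a + i)) (Set.Iio d) := by
  classical
  have hrepeat : ∃ d, ∃ a, 0 < d ∧ a + d ≤ t ∧ w (a + d) = w a := by
    obtain ⟨i, j, hij, h⟩ :=
      Fintype.exists_ne_map_eq_of_card_lt (fun i : Fin (t + 1) => w i) (by simpa using ht)
    rcases Fin.lt_or_lt_of_ne hij with hlt | hlt
    · exact ⟨j - i, i, by omega, by omega, by rw [Nat.add_sub_cancel' hlt.le]; exact h.symm⟩
    · exact ⟨i - j, j, by omega, by omega, by rw [Nat.add_sub_cancel' hlt.le]; exact h⟩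
  obtain ⟨a, hd, had, hclosed⟩ := Nat.find_spec hrepeat
  refine ⟨a, Nat.find hrepeat, t - (a + Nat.find hrepeat), by omega, hd, hclosed, ?_⟩
  -- a shorter closed segment inside would contradict the minimality of its length
  intro i hi j hj h
  have hi : i < Nat.find hrepeat := hi
  have hj : j < Nat.find hrepeat := hj
  by_contra hne
  rcases Nat.lt_or_gt_of_ne hne with hlt | hlt
  · refine Nat.find_min hrepeat (show j - i < _ by omega) ⟨a + i, by omega, by omega, ?_⟩
    simpa [show a + i + (j - i) = a + j by omega] using h.symm
  · refine Nat.find_min hrepeat (show i - j < _ by omega) ⟨a + j, by omega, by omega, ?_⟩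
    simpa [show a + j + (i - j) = a + i by omega] using h

end Walks

/-- Max-plus (Bellman–Ford) iteration: `y t j` is the largest weight of a walk of length `t`
ending at `j`. -/
structure IsMaxPlusIteration {α : Type*} (U : α → α → ℝ) (y : ℕ → α → ℝ) : Prop where
  zero : ∀ j, y 0 j = 0
  succ : ∀ t j, IsGreatest (Set.range fun k => y t k + U j k) (y (t + 1) j)

namespace IsMaxPlusIteration

variable {α : Type*} {U : α → α → ℝ} {y : ℕ → α → ℝ}

lemma of_sup' [Fintype α] (hne : (univ : Finset α).Nonempty) (h0 : ∀ j, y 0 j = 0)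
    (hstep : ∀ t j, y (t + 1) j = univ.sup' hne fun k => y t k + U j k) :
    IsMaxPlusIteration U y := by
  refine ⟨h0, fun t j => ⟨?_, ?_⟩⟩
  · obtain ⟨k, -, hk⟩ := exists_mem_eq_sup' hne fun k => y t k + U j k
    exact ⟨k, by rw [hstep, hk]⟩
  · rintro _ ⟨k, rfl⟩
    rw [hstep]
    exact le_sup' (fun k => y t k + U j k) (mem_univ k)

lemma monotone (h : IsMaxPlusIteration U y) (hdiag : ∀ j, U j j = 0) (j : α) :
    Monotone (y · j) :=
  monotone_nat_of_le_succ fun t => (h.succ t j).2 ⟨j, by simp [hdiag]⟩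

lemma walkWeight_le (h : IsMaxPlusIteration U y) (w : ℕ → α) (t : ℕ) :
    walkWeight U w t ≤ y t (w t) := by
  induction t with
  | zero => simp [walkWeight, h.zero]
  | succ t ih =>
    rw [walkWeight_succ]
    refine le_trans ?_ ((h.succ t (w (t + 1))).2 ⟨w t, rfl⟩)
    exact add_le_add_left ih _

lemma exists_walkWeight_eq (h : IsMaxPlusIteration U y) (t : ℕ) (j : α) :
    ∃ w : ℕ → α, w t = j ∧ walkWeight U w t = y t j := by
  induction t generalizing j with
  | zero => exact ⟨fun _ => j, rfl, by simp [walkWeight, h.zero]⟩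
  | succ t ih =>
    obtain ⟨k, hk⟩ := (h.succ t j).1
    obtain ⟨w, hwt, hw⟩ := ih k
    refine ⟨fun i => if i ≤ t then w i else j, by simp, ?_⟩
    have hprefix : walkWeight U (fun i => if i ≤ t then w i else j) t = walkWeight U w t :=
      sum_congr rfl fun i hi => by
        have hi := mem_range.1 hi
        simp [hi.le, Nat.add_one_le_of_lt hi]
    rw [walkWeight_succ, hprefix, hw, ← hk]
    simp [hwt]

/-- Without positive cycles, every walk can be shortened to one of length less than `card α`
that ends at the same vertex and weighs at least as much. -/
lemma walkWeight_le_card_sub_one [Fintype α] [DecidableEq α] (h : IsMaxPlusIteration U y)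
    (hdiag : ∀ j, U j j = 0) (hcyc : ∀ ρ : Equiv.Perm α, ∑ j, U (ρ j) j ≤ 0)
    (t : ℕ) (w : ℕ → α) : walkWeight U w t ≤ y (Fintype.card α - 1) (w t) := by
  induction t using Nat.strong_induction_on generalizing w with
  | _ t ih =>
  rcases lt_or_ge t (Fintype.card α) with ht | ht
  · exact (h.walkWeight_le w t).trans (h.monotone hdiag _ (by omega))
  obtain ⟨a, d, r, rfl, hd, hclosed, hinj⟩ := exists_injOn_closed_of_card_le w _ ht
  obtain ⟨ρ, hρ⟩ := exists_perm_sum_eq_walkWeight U hdiag (fun i => w (a + i)) d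
    (by simpa using hclosed) hinj
  have hshort := ih (a + r) (by omega) fun i => if i < a then w i else w (i + d)
  rw [if_neg (by omega), add_right_comm] at hshort
  rw [walkWeight_eq_add_of_closed U w a d r hclosed]
  linarith [hcyc ρ]

lemma add_le_card_sub_one [Fintype α] [DecidableEq α] (h : IsMaxPlusIteration U y)
    (hdiag : ∀ j, U j j = 0) (hcyc : ∀ ρ : Equiv.Perm α, ∑ j, U (ρ j) j ≤ 0) (j k : α) :
    y (Fintype.card α - 1) k + U j k ≤ y (Fintype.card α - 1) j := by
  have hcard : Fintype.card α - 1 + 1 = Fintype.card α :=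
    Nat.sub_add_cancel (Fintype.card_pos_iff.2 ⟨j⟩)
  obtain ⟨w, hwj, hw⟩ := h.exists_walkWeight_eq (Fintype.card α) j
  calc y (Fintype.card α - 1) k + U j k ≤ y (Fintype.card α) j :=
        hcard ▸ (h.succ _ j).2 ⟨k, rfl⟩
    _ = walkWeight U w (Fintype.card α) := hw.symm
    _ ≤ y (Fintype.card α - 1) j := hwj ▸ h.walkWeight_le_card_sub_one hdiag hcyc _ w

end IsMaxPlusIteration

lemma sum_sub_le_zero_of_forall_sum_le {α : Type*} [Fintype α] {V : α → α → ℝ}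
    {σ : Equiv.Perm α} (hσ : ∀ π : Equiv.Perm α, ∑ j, V (π j) j ≤ ∑ j, V (σ j) j)
    (ρ : Equiv.Perm α) : ∑ j, (V (σ (ρ j)) j - V (σ j) j) ≤ 0 := by
  rw [sum_sub_distrib, sub_nonpos]
  exact hσ (σ * ρ)

theorem prices_are_envy_free_general
    (n : ℕ) (hn : 1 ≤ n) (V : Fin n → Fin n → ℝ)
    (σ : Equiv.Perm (Fin n))
    (hσ : ∀ π : Equiv.Perm (Fin n), ∑ j, V (π j) j ≤ ∑ j, V (σ j) j)
    (V' : Fin n → Fin n → ℝ) (hV' : ∀ i j, V' i j = V (σ i) j)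
    (U : Fin n → Fin n → ℝ) (hU : ∀ j k, U j k = V' j k - V' k k)
    (y : ℕ → Fin n → ℝ) (h0 : ∀ j, y 0 j = 0)
    (hstep : ∀ t (j : Fin n), y (t + 1) j =
      Finset.univ.sup' ⟨⟨0, hn⟩, Finset.mem_univ _⟩ (fun k => y t k + U j k))
    (ybar : Fin n → ℝ) (hybar : ∀ j, ybar j = y (n - 1) j)
    (p : Fin n → ℝ) (hp : ∀ j, p j = V' j j - ybar j) :
    (∀ j : Fin n, V' j j - p j ≥ 0) ∧
      (∀ j k : Fin n, j ≠ k → V' j j - p j ≥ V' j k - p k) := by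
  have hdiag : ∀ j, U j j = 0 := fun j => by rw [hU, sub_self]
  have hcyc : ∀ ρ : Equiv.Perm (Fin n), ∑ j, U (ρ j) j ≤ 0 := fun ρ => by
    simpa only [hU, hV'] using sum_sub_le_zero_of_forall_sum_le hσ ρ
  have hy := IsMaxPlusIteration.of_sup' _ h0 hstep
  have hfix := hy.add_le_card_sub_one hdiag hcyc
  rw [Fintype.card_fin] at hfix
  have hnonneg : ∀ j, 0 ≤ ybar j := fun j => by
    rw [hybar, ← h0 j]
    exact hy.monotone hdiag j (Nat.zero_le _)
  refine ⟨fun j => ?_, fun j k _ => ?_⟩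
  · linarith [hp j, hnonneg j]
  · linarith [hp j, hp k, hybar j, hybar k, hU j k, hfix j k]

/-- Theorem 2 (envy-freeness): for an optimal allocation `σ` of the unit-demand
problem with entrywise nonnegative valuations `V`, the prices
`p j = V' j j - ȳ j` obtained from the limit `ȳ = y (n-1)` of the PricesEFPM
iteration are envy-free: every buyer's utility for his allocated item is
nonnegative and at least his utility for every other item. -/
theorem prices_are_envy_free
    (n : ℕ) (hn : 1 ≤ n) (V : Fin n → Fin n → ℝ)
    (hVnn : ∀ i j : Fin n, 0 ≤ V i j)
    (σ : Equiv.Perm (Fin n))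
    (hσ : ∀ π : Equiv.Perm (Fin n), ∑ j, V (π j) j ≤ ∑ j, V (σ j) j)
    (V' : Fin n → Fin n → ℝ) (hV' : ∀ i j, V' i j = V (σ i) j)
    (U : Fin n → Fin n → ℝ) (hU : ∀ j k, U j k = V' j k - V' k k)
    (y : ℕ → Fin n → ℝ) (h0 : ∀ j, y 0 j = 0)
    (hstep : ∀ t (j : Fin n), y (t + 1) j =
      Finset.univ.sup' ⟨⟨0, hn⟩, Finset.mem_univ _⟩ (fun k => y t k + U j k))
    (ybar : Fin n → ℝ) (hybar : ∀ j, ybar j = y (n - 1) j)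
    (p : Fin n → ℝ) (hp : ∀ j, p j = V' j j - ybar j) :
    (∀ j : Fin n, V' j j - p j ≥ 0) ∧
      (∀ j k : Fin n, j ≠ k → V' j j - p j ≥ V' j k - p k) :=
  prices_are_envy_free_general n hn V σ hσ V' hV' U hU y h0 hstep ybar hybar p hp
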